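/- The function u(x,y,t) = c₁(y − t/a − x⁴/(42a)) + (c₂/2)x² + 2c₃√x + (2/5)c₄x^{5/2} + c₅ satisfies the biharmonic heat equation on the paraboloid-type surface with f(x) = (1/2)ln x for x > 0. Specifically, with L(u) = (1/(2x))u_x + u_{xx} + x⁻¹u_{yy}, it holds that u_t = L(L(u)) on {x > 0}. -/

import Mathlib

/-!
Write `u = g x + c₁ y - (c₁ / a) t` with `g` a combination of powers `x ^ p`. On such functions
`L` only sees `g`, through the radial operator `g ↦ g' / (2x) + g''`, and that operator is
diagonal on powers: `x ^ p ↦ p (p - 1/2) x ^ (p - 2)`. Its kernel contains `1` and `√x`, so the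
terms in `c₃` and `c₅` drop out after one application of `L`, the terms in `c₂` and `c₄` (which
become `x ^ 0` and `x ^ (1/2)`) after two, and `x⁴` goes to `14 x²` and then to `42`:
`L (L u) = -(c₁ / (42 a)) · 14 · 3 = -c₁ / a = u_t`.
-/

noncomputable def pdx (u : ℝ → ℝ → ℝ → ℝ) : ℝ → ℝ → ℝ → ℝ :=
  fun x y t => deriv (fun s => u s y t) x

noncomputable def pdy (u : ℝ → ℝ → ℝ → ℝ) : ℝ → ℝ → ℝ → ℝ :=
  fun x y t => deriv (fun s => u x s t) y

noncomputable def pdt (u : ℝ → ℝ → ℝ → ℝ) : ℝ → ℝ → ℝ → ℝ :=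
  fun x y t => deriv (fun s => u x y s) t

/-- The spatial operator for `f x = (1/2) ln x`:
`L u = (1/(2x)) u_x + u_xx + x⁻¹ u_yy`. -/
noncomputable def Lpar (u : ℝ → ℝ → ℝ → ℝ) : ℝ → ℝ → ℝ → ℝ :=
  fun x y t => (1 / (2 * x)) * pdx u x y t + pdx (pdx u) x y t +
    x⁻¹ * pdy (pdy u) x y t

open Filter Topology

noncomputable def radialL (g : ℝ → ℝ) (x : ℝ) : ℝ :=
  1 / (2 * x) * deriv g x + deriv (deriv g) x

theorem Filter.EventuallyEq.radialL_eq {g h : ℝ → ℝ} {x : ℝ} (hgh : g =ᶠ[𝓝 x] h) :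
    radialL g x = radialL h x := by
  rw [radialL, radialL, hgh.deriv_eq, hgh.deriv.deriv_eq]

theorem hasDerivAt_sum_rpow {ι : Type*} (s : Finset ι) (α p : ι → ℝ) {x : ℝ} (hx : 0 < x) :
    HasDerivAt (fun r => ∑ i ∈ s, α i * r ^ p i) (∑ i ∈ s, α i * (p i * x ^ (p i - 1))) x :=
  HasDerivAt.fun_sum fun i _ => (Real.hasDerivAt_rpow_const (Or.inl hx.ne')).const_mul (α i)

theorem radialL_sum_rpow {ι : Type*} (s : Finset ι) (α p : ι → ℝ) {x : ℝ} (hx : 0 < x) :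
    radialL (fun r => ∑ i ∈ s, α i * r ^ p i) x =
      ∑ i ∈ s, α i * (p i * (p i - 1 / 2)) * x ^ (p i - 2) := by
  have hderiv : deriv (fun r => ∑ i ∈ s, α i * r ^ p i) =ᶠ[𝓝 x]
      fun r => ∑ i ∈ s, (α i * p i) * r ^ (p i - 1) := by
    filter_upwards [Ioi_mem_nhds hx] with r hr
    rw [(hasDerivAt_sum_rpow s α p hr).deriv]
    exact Finset.sum_congr rfl fun i _ => by ring
  rw [radialL, hderiv.deriv_eq, (hasDerivAt_sum_rpow s α p hx).deriv,
    (hasDerivAt_sum_rpow s _ _ hx).deriv, Finset.mul_sum, ← Finset.sum_add_distrib]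
  refine Finset.sum_congr rfl fun i _ => ?_
  have hpow : x ^ (p i - 1) = x ^ (p i - 2) * x := by
    rw [← Real.rpow_add_one hx.ne']; ring_nf
  rw [hpow, show p i - 1 - 1 = p i - 2 by ring]
  field_simp
  ring

section Separated

variable {u : ℝ → ℝ → ℝ → ℝ} {g k : ℝ → ℝ} {c : ℝ}

theorem pdx_eq_deriv (hu : ∀ x y t, u x y t = g x + c * y + k t) (x y t : ℝ) :
    pdx u x y t = deriv g x := by
  simp only [pdx, hu, add_assoc, deriv_add_const]

theorem pdx_pdx_eq_deriv_deriv (hu : ∀ x y t, u x y t = g x + c * y + k t) (x y t : ℝ) :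
    pdx (pdx u) x y t = deriv (deriv g) x := by
  show deriv (fun s => pdx u s y t) x = _
  simp only [pdx_eq_deriv hu]

theorem pdy_pdy_eq_zero (hu : ∀ x y t, u x y t = g x + c * y + k t) (x y t : ℝ) :
    pdy (pdy u) x y t = 0 := by
  have hpdy : ∀ x y t, pdy u x y t = c := fun x y t => by
    simp only [pdy, hu, deriv_add_const', deriv_const_add', deriv_const_mul_id']
  show deriv (fun s => pdy u x s t) y = 0
  simp only [hpdy, deriv_const]

theorem pdt_eq_deriv (hu : ∀ x y t, u x y t = g x + c * y + k t) (x y t : ℝ) :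
    pdt u x y t = deriv k t := by
  simp only [pdt, hu, deriv_const_add]

theorem Lpar_eq_radialL (hu : ∀ x y t, u x y t = g x + c * y + k t) (x y t : ℝ) :
    Lpar u x y t = radialL g x := by
  rw [Lpar, pdx_eq_deriv hu, pdx_pdx_eq_deriv_deriv hu, pdy_pdy_eq_zero hu, mul_zero, add_zero,
    radialL]

theorem Lpar_Lpar_eq_radialL_radialL (hu : ∀ x y t, u x y t = g x + c * y + k t) (x y t : ℝ) :
    Lpar (Lpar u) x y t = radialL (radialL g) x :=
  Lpar_eq_radialL (c := 0) (k := fun _ => 0)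
    (fun x y t => by rw [Lpar_eq_radialL hu, zero_mul, add_zero, add_zero]) x y t

end Separated

theorem stmt9_general (a c₁ c₂ c₃ c₄ c₅ : ℝ)
    (u : ℝ → ℝ → ℝ → ℝ)
    (hu : ∀ x y t, u x y t =
      c₁ * (y - t / a - x ^ 4 / (42 * a)) + c₂ / 2 * x ^ 2 +
        2 * c₃ * Real.sqrt x + 2 / 5 * c₄ * x ^ ((5 : ℝ) / 2) + c₅) :
    ∀ x y t, 0 < x → pdt u x y t = Lpar (Lpar u) x y t := by
  intro x y t hx
  let α : Fin 5 → ℝ := ![-c₁ / (42 * a), c₂ / 2, 2 * c₃, 2 / 5 * c₄, c₅]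
  let p : Fin 5 → ℝ := ![4, 2, 1 / 2, 5 / 2, 0]
  have hsep : ∀ x y t, u x y t =
      (fun r => ∑ i, α i * r ^ p i) x + c₁ * y + (fun s => -(c₁ / a) * s) t := by
    intro x y t
    rw [hu]
    simp only [α, p, Fin.sum_univ_five, Real.sqrt_eq_rpow, Matrix.cons_val_zero, Matrix.cons_val_one,
      Matrix.cons_val, Real.rpow_ofNat, Real.rpow_zero]
    ring
  have hLu : radialL (fun r => ∑ i, α i * r ^ p i) =ᶠ[𝓝 x]
      fun r : ℝ => ∑ i, (α i * (p i * (p i - 1 / 2))) * r ^ (p i - 2) := by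
    filter_upwards [Ioi_mem_nhds hx] with r hr
    exact radialL_sum_rpow _ α p hr
  rw [pdt_eq_deriv hsep, Lpar_Lpar_eq_radialL_radialL hsep, hLu.radialL_eq,
    radialL_sum_rpow _ _ _ hx]
  simp only [α, p, Fin.sum_univ_five, Matrix.cons_val_zero, Matrix.cons_val_one, Matrix.cons_val]
  norm_num
  ring

/-- `u = c₁ (y - t/a - x⁴/(42a)) + (c₂/2) x² + 2 c₃ √x
+ (2/5) c₄ x^{5/2} + c₅` solves the biharmonic heat equation
`u_t = L(L u)` with `L = (1/(2x))∂ₓ + ∂ₓₓ + x⁻¹ ∂_{yy}` on `{x > 0}`. -/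
theorem stmt9 (a c₁ c₂ c₃ c₄ c₅ : ℝ) (ha : a ≠ 0)
    (u : ℝ → ℝ → ℝ → ℝ)
    (hu : ∀ x y t, u x y t =
      c₁ * (y - t / a - x ^ 4 / (42 * a)) + c₂ / 2 * x ^ 2 +
        2 * c₃ * Real.sqrt x + 2 / 5 * c₄ * x ^ ((5 : ℝ) / 2) + c₅) :
    ∀ x y t, 0 < x → pdt u x y t = Lpar (Lpar u) x y t :=
  stmt9_general a c₁ c₂ c₃ c₄ c₅ u hu
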